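/- Let R be an integral domain of characteristic p > 0, let B = R[x_1,…,x_n] be the polynomial ring in n variables over R, and let F = (f_1,…,f_{n-1}) ∈ B^{n-1}. If F is extendable, then there exists a locally finite iterative higher R-derivation (lfihd) D on B which is of Jacobian type determined by F, satisfies B^D = R[f_1,…,f_{n-1}], and has a slice. -/

import Mathlib

/-!
An extension `s` of `F` makes `B` a polynomial ring `R[F][s]`: there is an `R`-algebra
isomorphism `E : R[y₁, …, yₙ₋₁][T] ≃ B` with `T ↦ s` and `yᵢ ↦ fᵢ`. Transporting the Hasse
derivatives `Hₗ` with respect to `T` along `E` and rescaling by a unit `r ∈ R` gives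
`Dₗ = rˡ • E ∘ Hₗ ∘ E⁻¹`, a locally finite iterative higher derivation with kernel
`E(R[y]) = R[F]`, for which `s` is a slice.
The Jacobian derivation `Δ_F` kills `R[F]`, hence `Δ_F = Δ_F(s) • E ∘ d/dT ∘ E⁻¹`, and `Δ_F(s)` is
the Jacobian determinant of the automorphism `(F, s)` of `B`: a unit of `B`, i.e. a unit `r` of
`R`. With this `r` we get `D₁ = Δ_F`, and iterativity gives `ℓ! • Dₗ = D₁^ℓ` in every
characteristic.
-/

open MvPolynomial

/-- A higher `R`-derivation on `B`: a family of `R`-linear maps `D ℓ : B → B`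
with `D 0 = id` and the Leibniz rule `D ℓ (a*b) = ∑_{i+j=ℓ} D i a * D j b`. -/
structure HigherDerivation (R B : Type*) [CommRing R] [CommRing B] [Algebra R B] where
  D : ℕ → B →ₗ[R] B
  D_zero : D 0 = LinearMap.id
  leibniz : ∀ (ℓ : ℕ) (a b : B),
    D ℓ (a * b) = ∑ ij ∈ Finset.HasAntidiagonal.antidiagonal ℓ, D ij.1 a * D ij.2 b

namespace HigherDerivation

variable {R B : Type*} [CommRing R] [CommRing B] [Algebra R B]

/-- The kernel `B^D = ⋂_{ℓ ≥ 1} ker D_ℓ` of a higher derivation. -/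
def kerSet (hd : HigherDerivation R B) : Set B :=
  {b | ∀ ℓ : ℕ, 1 ≤ ℓ → hd.D ℓ b = 0}

/-- `D` is locally finite. -/
def LocallyFinite (hd : HigherDerivation R B) : Prop :=
  ∀ b : B, ∃ N : ℕ, ∀ ℓ : ℕ, N ≤ ℓ → hd.D ℓ b = 0

/-- `D` is iterative: `D_i ∘ D_j = binom(i+j, j) • D_{i+j}`. -/
def Iterative (hd : HigherDerivation R B) : Prop :=
  ∀ (i j : ℕ) (b : B), hd.D i (hd.D j b) = (i + j).choose j • hd.D (i + j) b

/-- `s` is a slice of `D`: the `t`-degree `N ≥ 1` of `φ_D(s)` is minimal among the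
`t`-degrees of `φ_D(b)` for `b ∉ B^D`, and the leading `t`-coefficient `D N s` of
`φ_D(s)` is a unit of `B` (in particular `s ∉ B^D`). -/
def IsSlice (hd : HigherDerivation R B) (s : B) : Prop :=
  ∃ N : ℕ, 1 ≤ N ∧ hd.D N s ≠ 0 ∧ (∀ ℓ : ℕ, N < ℓ → hd.D ℓ s = 0) ∧
    IsUnit (hd.D N s) ∧ ∀ b : B, b ∉ hd.kerSet → ∃ m : ℕ, N ≤ m ∧ hd.D m b ≠ 0

end HigherDerivation
/-- The Jacobian derivation `Δ_F` on `R[x_0, …, x_n]` determined by the `n`-tuple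
`F = (f 0, …, f (n-1))`: `Δ_F(g)` is the determinant of the `(n+1) × (n+1)` matrix
whose first `n` rows are the partials of the `f i` and last row the partials of `g`. -/
noncomputable def jacobianDerivF {R : Type*} [CommRing R] {n : ℕ}
    (f : Fin n → MvPolynomial (Fin (n + 1)) R) (g : MvPolynomial (Fin (n + 1)) R) :
    MvPolynomial (Fin (n + 1)) R :=
  Matrix.det (Matrix.of fun i j : Fin (n + 1) =>
    Fin.lastCases (pderiv j g) (fun i' : Fin n => pderiv j (f i')) i)

/-- `D` is of Jacobian type determined by `F = (f 0, …, f (n-1))` (in characteristic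
`p`): the `f i` are algebraically independent over `R`, `f i ∈ B^D`, `D_1 = Δ_F`, and
`ℓ! • D_ℓ = Δ_F^[ℓ]` for `0 ≤ ℓ ≤ p-1`. -/
def IsJacobianTypeF {R : Type*} [CommRing R] {n : ℕ} (p : ℕ)
    (hd : HigherDerivation R (MvPolynomial (Fin (n + 1)) R))
    (f : Fin n → MvPolynomial (Fin (n + 1)) R) : Prop :=
  AlgebraicIndependent R f ∧ (∀ i, f i ∈ hd.kerSet) ∧
    (∀ g, hd.D 1 g = jacobianDerivF f g) ∧
    ∀ ℓ : ℕ, ℓ < p → ∀ g, ℓ.factorial • hd.D ℓ g = (jacobianDerivF f)^[ℓ] g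

/-- `F = (f 0, …, f (n-1))` is extendable: there is `s` such that
`f 0, …, f (n-1), s` are algebraically independent over `R` and generate
`R[x_0, …, x_n]` as an `R`-algebra. -/
def Extendable {R : Type*} [CommRing R] {n : ℕ}
    (f : Fin n → MvPolynomial (Fin (n + 1)) R) : Prop :=
  ∃ s : MvPolynomial (Fin (n + 1)) R,
    AlgebraicIndependent R (Fin.snoc f s) ∧
      Algebra.adjoin R (Set.range (Fin.snoc f s)) = ⊤


namespace HigherDerivation

variable {R A B : Type*} [CommRing R] [CommRing A] [Algebra R A] [CommRing B] [Algebra R B]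

def map (hd : HigherDerivation R A) (e : A ≃ₐ[R] B) : HigherDerivation R B where
  D ℓ := e.toLinearMap ∘ₗ hd.D ℓ ∘ₗ e.symm.toLinearMap
  D_zero := by ext; simp [hd.D_zero]
  leibniz ℓ a b := by simp [hd.leibniz]

@[simp]
theorem map_D_apply (hd : HigherDerivation R A) (e : A ≃ₐ[R] B) (ℓ : ℕ) (b : B) :
    (hd.map e).D ℓ b = e (hd.D ℓ (e.symm b)) := rfl

theorem kerSet_map (hd : HigherDerivation R A) (e : A ≃ₐ[R] B) :
    (hd.map e).kerSet = e '' hd.kerSet := by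
  ext b
  simp only [kerSet, Set.mem_image, Set.mem_ofPred_eq, map_D_apply, map_eq_zero_iff _ e.injective]
  exact ⟨fun h ↦ ⟨_, h, e.apply_symm_apply b⟩, by rintro ⟨a, ha, rfl⟩; simpa using ha⟩

theorem LocallyFinite.map {hd : HigherDerivation R A} (h : hd.LocallyFinite) (e : A ≃ₐ[R] B) :
    (hd.map e).LocallyFinite := fun b ↦
  (h (e.symm b)).imp fun _ hN ℓ hℓ ↦ by simp [hN ℓ hℓ]

theorem Iterative.map {hd : HigherDerivation R A} (h : hd.Iterative) (e : A ≃ₐ[R] B) :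
    (hd.map e).Iterative := fun i j b ↦ by simp [h i j]

def rescale (hd : HigherDerivation R B) (r : R) : HigherDerivation R B where
  D ℓ := r ^ ℓ • hd.D ℓ
  D_zero := by simp [hd.D_zero]
  leibniz ℓ a b := by
    simp only [LinearMap.smul_apply, hd.leibniz, Finset.smul_sum]
    refine Finset.sum_congr rfl fun ij hij ↦ ?_
    rw [← Finset.HasAntidiagonal.mem_antidiagonal.mp hij, pow_add, smul_mul_smul_comm]

@[simp]
theorem rescale_D_apply (hd : HigherDerivation R B) (r : R) (ℓ : ℕ) (b : B) :
    (hd.rescale r).D ℓ b = r ^ ℓ • hd.D ℓ b := rfl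

theorem kerSet_rescale (hd : HigherDerivation R B) {r : R} (hr : IsUnit r) :
    (hd.rescale r).kerSet = hd.kerSet := by
  ext b
  simp [kerSet, (hr.pow _).smul_eq_zero]

theorem LocallyFinite.rescale {hd : HigherDerivation R B} (h : hd.LocallyFinite) (r : R) :
    (hd.rescale r).LocallyFinite := fun b ↦
  (h b).imp fun _ hN ℓ hℓ ↦ by simp [hN ℓ hℓ]

theorem Iterative.rescale {hd : HigherDerivation R B} (h : hd.Iterative) (r : R) :
    (hd.rescale r).Iterative := fun i j b ↦ by
  simp only [rescale_D_apply, map_smul, h i j]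
  rw [smul_smul, ← pow_add, add_comm j, smul_comm]

theorem Iterative.factorial_smul_D {hd : HigherDerivation R B} (h : hd.Iterative) (ℓ : ℕ)
    (b : B) : ℓ.factorial • hd.D ℓ b = (hd.D 1)^[ℓ] b := by
  induction ℓ with
  | zero => simp [hd.D_zero]
  | succ ℓ ih =>
    rw [Function.iterate_succ_apply', ← ih, map_nsmul, h, add_comm 1, Nat.choose_succ_self_right,
      smul_smul, Nat.factorial_succ, mul_comm]

theorem isSlice_of_isUnit [Nontrivial B] {hd : HigherDerivation R B} {s : B}
    (hs : IsUnit (hd.D 1 s)) (hvanish : ∀ ℓ, 1 < ℓ → hd.D ℓ s = 0) : hd.IsSlice s :=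
  ⟨1, le_rfl, hs.ne_zero, hvanish, hs, fun b hb ↦ by simpa [kerSet] using hb⟩

section Hasse

open Polynomial

variable (R A : Type*) [CommRing R] [CommRing A] [Algebra R A]

noncomputable def hasse : HigherDerivation R A[X] where
  D ℓ := (hasseDeriv ℓ).restrictScalars R
  D_zero := by ext; simp
  leibniz ℓ a b := hasseDeriv_mul ℓ a b

variable {R A}

@[simp]
theorem hasse_D_apply (ℓ : ℕ) (p : A[X]) : (hasse R A).D ℓ p = hasseDeriv ℓ p := rfl

variable (R A)

theorem hasse_locallyFinite : (hasse R A).LocallyFinite := fun p ↦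
  ⟨p.natDegree + 1, fun _ hℓ ↦ hasseDeriv_eq_zero_of_lt_natDegree p _ hℓ⟩

theorem hasse_iterative : (hasse R A).Iterative := fun i j p ↦ by
  rw [hasse_D_apply, hasse_D_apply, ← Nat.choose_symm_add]
  simpa using LinearMap.congr_fun (hasseDeriv_comp i j) p

theorem kerSet_hasse : (hasse R A).kerSet = Set.range (Polynomial.C : A → A[X]) := by
  ext p
  constructor
  · intro hp
    refine ⟨p.coeff 0, ext fun k ↦ ?_⟩
    rcases Nat.eq_zero_or_pos k with rfl | hk
    · simp
    · simpa [Polynomial.coeff_C, hk.ne', hasseDeriv_coeff, eq_comm] using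
        congr_arg (Polynomial.coeff · 0) (hp k hk)
  · rintro ⟨a, rfl⟩ ℓ hℓ
    exact hasseDeriv_C ℓ a hℓ

end Hasse

end HigherDerivation

namespace Derivation

variable {R S M : Type*} [CommSemiring R] [CommSemiring S] [Algebra R S] [AddCommMonoid M]
  [Module R M] [Module S M]

theorem map_mvPolynomial_aeval {σ : Type*} [Fintype σ] (d : Derivation R S M) (u : σ → S)
    (q : MvPolynomial σ R) : d (aeval u q) = ∑ k, aeval u (pderiv k q) • d (u k) := by
  classical
  induction q using MvPolynomial.induction_on with
  | C a => simp
  | add p q hp hq => simp [hp, hq, add_smul, Finset.sum_add_distrib]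
  | mul_X p i hp =>
    simp [hp, add_smul, Finset.sum_add_distrib, Finset.smul_sum, pderiv_X, Pi.single_apply,
      mul_smul, smul_comm (u i), apply_ite (aeval u), ite_smul]

theorem map_polynomial_algHom {A : Type*} [CommSemiring A] [Algebra R A] (d : Derivation R S M)
    (φ : Polynomial A →ₐ[R] S) (hC : ∀ a, d (φ (Polynomial.C a)) = 0) (p : Polynomial A) :
    d (φ p) = φ (Polynomial.derivative p) • d (φ Polynomial.X) := by
  induction p using Polynomial.induction_on with
  | C a => simp [hC]
  | add p q hp hq => simp [hp, hq, add_smul]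
  | monomial k a _ =>
    simp [hC, Derivation.leibniz_pow, mul_smul, ← Nat.cast_smul_eq_nsmul S]

end Derivation

section Jacobian

variable {R : Type*} [CommRing R]

noncomputable def jacobianMatrix {σ : Type*} (u : σ → MvPolynomial σ R) :
    Matrix σ σ (MvPolynomial σ R) :=
  .of fun k j ↦ pderiv j (u k)

theorem isUnit_det_jacobianMatrix_of_surjective {σ : Type*} [Fintype σ] [DecidableEq σ]
    {u : σ → MvPolynomial σ R} (hu : Function.Surjective (aeval (R := R) u)) :
    IsUnit (jacobianMatrix u).det := by
  choose v hv using fun k ↦ hu (X k : MvPolynomial σ R)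
  refine Matrix.isUnit_det_of_left_inverse (B := .of fun k m ↦ aeval u (pderiv m (v k))) ?_
  refine Matrix.ext fun k j ↦ ?_
  simp only [Matrix.mul_apply, Matrix.of_apply, jacobianMatrix, ← smul_eq_mul,
    ← Derivation.map_mvPolynomial_aeval, hv, pderiv_X, Pi.single_apply, Matrix.one_apply]

variable {n : ℕ} (f : Fin n → MvPolynomial (Fin (n + 1)) R)

theorem jacobianDerivF_eq_det_jacobianMatrix (g : MvPolynomial (Fin (n + 1)) R) :
    jacobianDerivF f g = (jacobianMatrix (Fin.snoc f g : Fin (n + 1) → _)).det := by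
  refine congrArg Matrix.det (Matrix.ext fun i j ↦ ?_)
  induction i using Fin.lastCases <;> simp [jacobianMatrix]

theorem jacobianDerivF_self (i : Fin n) : jacobianDerivF f (f i) = 0 :=
  Matrix.det_zero_of_row_eq (Fin.castSucc_lt_last i).ne (by ext; simp)

/-- The Laplace expansion of `jacobianDerivF f` along its last row, which exhibits it as a
derivation. -/
noncomputable def jacobianDerivation :
    Derivation R (MvPolynomial (Fin (n + 1)) R) (MvPolynomial (Fin (n + 1)) R) :=
  ∑ j : Fin (n + 1), ((-1) ^ (n + j : ℕ) *
    (Matrix.of fun i k : Fin n ↦ pderiv (j.succAbove k) (f i)).det) • pderiv j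

theorem jacobianDerivation_apply (g : MvPolynomial (Fin (n + 1)) R) :
    jacobianDerivation f g = jacobianDerivF f g := by
  rw [jacobianDerivF, Matrix.det_succ_row _ (Fin.last n), jacobianDerivation,
    ← Derivation.coeFnAddMonoidHom_apply, map_sum, Finset.sum_apply]
  refine Finset.sum_congr rfl fun j _ ↦ ?_
  simp only [Derivation.coeFnAddMonoidHom_apply, Derivation.coe_smul, Pi.smul_apply, smul_eq_mul,
    Fin.val_last, Matrix.of_apply, Fin.lastCases_last, Matrix.submatrix, Fin.succAbove_last,
    Fin.lastCases_castSucc]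
  ring

theorem jacobianDerivF_aeval (a : MvPolynomial (Fin n) R) : jacobianDerivF f (aeval f a) = 0 := by
  rw [← jacobianDerivation_apply, Derivation.map_mvPolynomial_aeval]
  simp [jacobianDerivation_apply, jacobianDerivF_self]

theorem jacobianDerivF_algHom_apply
    (φ : Polynomial (MvPolynomial (Fin n) R) →ₐ[R] MvPolynomial (Fin (n + 1)) R)
    (hφ : ∀ a, φ (Polynomial.C a) = aeval f a) (p : Polynomial (MvPolynomial (Fin n) R)) :
    jacobianDerivF f (φ p) = φ (Polynomial.derivative p) * jacobianDerivF f (φ Polynomial.X) := by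
  simp only [← jacobianDerivation_apply]
  exact (jacobianDerivation f).map_polynomial_algHom φ
    (fun a ↦ by simpa [jacobianDerivation_apply, hφ] using jacobianDerivF_aeval f a) p

end Jacobian

namespace Extendable

variable {R : Type*} [CommRing R] {n : ℕ} {f : Fin n → MvPolynomial (Fin (n + 1)) R}

theorem algebraicIndependent (h : Extendable f) : AlgebraicIndependent R f := by
  obtain ⟨s, hind, -⟩ := h
  simpa using hind.comp Fin.castSucc (Fin.castSucc_injective _)

theorem exists_algEquiv (h : Extendable f) :
    ∃ (s : MvPolynomial (Fin (n + 1)) R)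
      (E : Polynomial (MvPolynomial (Fin n) R) ≃ₐ[R] MvPolynomial (Fin (n + 1)) R),
      E Polynomial.X = s ∧ (∀ a, E (Polynomial.C a) = aeval f a) ∧
        IsUnit (jacobianDerivF f s) := by
  obtain ⟨s, hind, hadj⟩ := h
  have hsurj : Function.Surjective (aeval (R := R) (Fin.snoc f s : Fin (n + 1) → _)) := by
    rw [← AlgHom.range_eq_top, ← Algebra.adjoin_range_eq_range_aeval, hadj]
  let E := ((optionEquivLeft R (Fin n)).symm.trans (renameEquiv R finSuccEquivLast.symm)).trans
    (AlgEquiv.ofBijective _ ⟨hind, hsurj⟩)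
  refine ⟨s, E, by simp [E], fun a ↦ ?_, ?_⟩
  · have : E.toAlgHom.comp (IsScalarTower.toAlgHom R _ _) = aeval f := by
      ext i; simp [E]
    exact DFunLike.congr_fun this a
  · rw [jacobianDerivF_eq_det_jacobianMatrix]
    exact isUnit_det_jacobianMatrix_of_surjective hsurj

end Extendable

universe u

theorem stmt9_general {R : Type u} [CommRing R] [IsDomain R] (p : ℕ)
    {n : ℕ} (f : Fin n → MvPolynomial (Fin (n + 1)) R)
    (hext : Extendable f) :
    ∃ hd : HigherDerivation R (MvPolynomial (Fin (n + 1)) R),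
      hd.LocallyFinite ∧ hd.Iterative ∧ IsJacobianTypeF p hd f ∧
      hd.kerSet = ↑(Algebra.adjoin R (Set.range f)) ∧
      ∃ s : MvPolynomial (Fin (n + 1)) R, hd.IsSlice s := by
  obtain ⟨s, E, hEX, hEC, hs⟩ := hext.exists_algEquiv
  obtain ⟨r, hr, hrs⟩ := isUnit_iff_eq_C_of_isReduced.mp hs
  have hEs : E.symm s = Polynomial.X := E.symm_apply_eq.mpr hEX.symm
  let D := ((HigherDerivation.hasse R _).map E).rescale r
  have hiter : D.Iterative := ((HigherDerivation.hasse_iterative R _).map E).rescale r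
  have hker : D.kerSet = Algebra.adjoin R (Set.range f) := by
    rw [HigherDerivation.kerSet_rescale _ hr, HigherDerivation.kerSet_map,
      HigherDerivation.kerSet_hasse, ← Set.range_comp, Algebra.adjoin_range_eq_range_aeval]
    ext; simp [hEC]
  have hD1 : ∀ g, D.D 1 g = jacobianDerivF f g := fun g ↦ by
    simpa [D, hEX, hrs, smul_eq_C_mul, mul_comm] using
      (jacobianDerivF_algHom_apply f E hEC (E.symm g)).symm
  refine ⟨D, ((HigherDerivation.hasse_locallyFinite R _).map E).rescale r, hiter,
    ⟨hext.algebraicIndependent, fun i ↦ hker ▸ Algebra.subset_adjoin ⟨i, rfl⟩, hD1,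
      fun ℓ _ g ↦ ?_⟩, hker, s, HigherDerivation.isSlice_of_isUnit ?_ fun ℓ hℓ ↦ ?_⟩
  · rw [hiter.factorial_smul_D, show ⇑(D.D 1) = jacobianDerivF f from funext hD1]
  · simpa [D, hEs, Polynomial.hasseDeriv_one', Algebra.smul_def] using hr
  · simp [D, hEs, Polynomial.hasseDeriv_X ℓ hℓ]

/-- Theorem 2.8, (i) ⟹ (ii). Let `R` be an integral domain of
characteristic `p > 0`, `B = R[x_0, …, x_n]`, and `F = (f 0, …, f (n-1)) ∈ Bⁿ`.
If `F` is extendable, then there exists a locally finite iterative higher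
`R`-derivation `D` on `B` of Jacobian type determined by `F` with
`B^D = R[f 0, …, f (n-1)]` which has a slice. -/
theorem stmt9 {R : Type u} [CommRing R] [IsDomain R] (p : ℕ) (hp : 0 < p) [CharP R p]
    {n : ℕ} (f : Fin n → MvPolynomial (Fin (n + 1)) R)
    (hext : Extendable f) :
    ∃ hd : HigherDerivation R (MvPolynomial (Fin (n + 1)) R),
      hd.LocallyFinite ∧ hd.Iterative ∧ IsJacobianTypeF p hd f ∧
      hd.kerSet = ↑(Algebra.adjoin R (Set.range f)) ∧
      ∃ s : MvPolynomial (Fin (n + 1)) R, hd.IsSlice s :=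
  stmt9_general p f hext
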